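/- arXiv:2002.05360 — 2 statements merged into one kernel-verified Lean document; each statement's English description precedes it below -/
import Mathlib

section
/- Let T > 0, k > 0 and let F : [0,T] → [0,∞) be continuous, nondecreasing with F(0) = 0. Suppose z : [0,T] → (0,∞) is C¹, nonincreasing, with z(0) > 0, and satisfies −z'(t) ≤ k F(t) z(t) + k F(t) ∫₀ᵗ (−z'(τ)) dτ for all t. Then z(0)·t ≤ (∫₀ᵗ z(τ) dτ) · exp(k ∫₀ᵗ F(τ) dτ) for all t ∈ [0,T]. -/
open MeasureTheory Real Set intervalIntegral

/-!
Since `∫₀ᵗ (-z') ≤ z(0) - z(t)`, the hypothesis gives that `z₁ = z(0) - z` satisfies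
`z₁' ≤ kF z₁ + kF z`, and Gronwall's lemma with integrating factor `e^{-G}`, `G = k ∫₀ᵗ F`,
gives `z₁ e^{-G} ≤ ∫₀ᵗ kF z e^{-G}`. As `F` is nondecreasing, the right-hand side is at most
`kF(t) z₂(t)` with `z₂ = ∫₀ᵗ z e^{-G}`, so `z₂' + kF z₂ ≥ z(0) e^{-G}`. Gronwall's lemma again,
now with integrating factor `e^{G}`, gives `z₂(t) e^{G(t)} ≥ z(0) t`, and `z₂ ≤ ∫₀ᵗ z` as `G ≥ 0`.
-/

section Primitive

variable {f : ℝ → ℝ} {a b : ℝ}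

theorem ContinuousOn.continuousOn_primitive_Icc (hf : ContinuousOn f (Icc a b)) :
    ContinuousOn (fun t => ∫ τ in a..t, f τ) (Icc a b) := by
  intro t ht
  have hab : uIcc a b = Icc a b := uIcc_of_le (ht.1.trans ht.2)
  have hprim := continuousOn_primitive_interval (μ := volume) (hab ▸ hf.integrableOn_Icc)
  exact (hab ▸ hprim) t ht

theorem ContinuousOn.hasDerivAt_primitive (hf : ContinuousOn f (Icc a b)) {t : ℝ}
    (ht : t ∈ Ioo a b) : HasDerivAt (fun u => ∫ τ in a..u, f τ) (f t) t :=
  integral_hasDerivAt_right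
    ((hf.mono (Icc_subset_Icc_right ht.2.le)).intervalIntegrable_of_Icc ht.1.le)
    ((hf.mono Ioo_subset_Icc_self).stronglyMeasurableAtFilter isOpen_Ioo t ht)
    (hf.continuousAt (Icc_mem_nhds ht.1 ht.2))

end Primitive

theorem AntitoneOn.integral_neg_deriv_le {z z' : ℝ → ℝ} {a b : ℝ} (hz : AntitoneOn z (Icc a b))
    (hab : a ≤ b) (hderiv : ∀ t ∈ Icc a b, HasDerivAt z (z' t) t) :
    ∫ τ in a..b, -z' τ ≤ z a - z b := by
  by_cases hint : IntervalIntegrable z' volume a b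
  · rw [intervalIntegral.integral_neg,
      integral_eq_sub_of_hasDerivAt (by rwa [uIcc_of_le hab]) hint, neg_sub]
  · have hint' : ¬ IntervalIntegrable (fun τ => -z' τ) volume a b := fun h => hint (by
      simpa [Pi.neg_def] using h.neg)
    rw [integral_undef hint', sub_nonneg]
    exact hz (left_mem_Icc.2 hab) (right_mem_Icc.2 hab) hab

theorem MonotoneOn.integral_mul_le {φ h : ℝ → ℝ} {a b : ℝ} (hφ : MonotoneOn φ (Icc a b))
    (hab : a ≤ b) (hh : ∀ t ∈ Icc a b, 0 ≤ h t)
    (hφh : IntervalIntegrable (fun t => φ t * h t) volume a b)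
    (hhi : IntervalIntegrable h volume a b) :
    ∫ τ in a..b, φ τ * h τ ≤ φ b * ∫ τ in a..b, h τ := by
  rw [← intervalIntegral.integral_const_mul]
  refine integral_mono_on hab hφh (hhi.const_mul _) fun τ hτ => ?_
  exact mul_le_mul_of_nonneg_right (hφ hτ (right_mem_Icc.2 hab) hτ.2) (hh τ hτ)

section Gronwall

variable {u u' G β γ : ℝ → ℝ} {a b : ℝ}

theorem mul_exp_neg_le_add_integral_of_deriv_le (hu : ContinuousOn u (Icc a b))
    (hu' : ∀ t ∈ Ioo a b, HasDerivAt u (u' t) t) (hG : ContinuousOn G (Icc a b))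
    (hG' : ∀ t ∈ Ioo a b, HasDerivAt G (β t) t) (hγ : ContinuousOn γ (Icc a b))
    (hle : ∀ t ∈ Ioo a b, u' t ≤ β t * u t + γ t) :
    ∀ t ∈ Icc a b, u t * exp (-G t) ≤ u a * exp (-G a) + ∫ τ in a..t, γ τ * exp (-G τ) := by
  intro t ht
  have hIcc : Icc a t ⊆ Icc a b := Icc_subset_Icc_right ht.2
  have hIoo : Ioo a t ⊆ Ioo a b := Ioo_subset_Ioo_right ht.2
  have hE : ContinuousOn (fun τ => exp (-G τ)) (Icc a b) := hG.neg.rexp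
  have hderiv : ∀ τ ∈ Ioo a t, HasDerivWithinAt (fun τ => u τ * exp (-G τ))
      (exp (-G τ) * (u' τ - β τ * u τ)) (Ioi τ) τ := fun τ hτ =>
    (((hu' τ (hIoo hτ)).mul (hG' τ (hIoo hτ)).neg.exp).congr_deriv
      (by simp only [Pi.neg_apply]; ring)).hasDerivWithinAt
  have hbound : ∀ τ ∈ Ioo a t, exp (-G τ) * (u' τ - β τ * u τ) ≤ γ τ * exp (-G τ) :=
    fun τ hτ => by
      rw [mul_comm (γ τ)]
      exact mul_le_mul_of_nonneg_left (by linarith [hle τ (hIoo hτ)]) (exp_pos _).le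
  have := sub_le_integral_of_hasDeriv_right_of_le (g := fun τ => u τ * exp (-G τ))
    (φ := fun τ => γ τ * exp (-G τ)) ht.1 ((hu.mul hE).mono hIcc) hderiv
    ((hγ.mul hE).mono hIcc).integrableOn_Icc hbound
  linarith

theorem add_integral_le_mul_exp_neg_of_mul_add_le_deriv (hu : ContinuousOn u (Icc a b))
    (hu' : ∀ t ∈ Ioo a b, HasDerivAt u (u' t) t) (hG : ContinuousOn G (Icc a b))
    (hG' : ∀ t ∈ Ioo a b, HasDerivAt G (β t) t) (hγ : ContinuousOn γ (Icc a b))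
    (hle : ∀ t ∈ Ioo a b, β t * u t + γ t ≤ u' t) :
    ∀ t ∈ Icc a b, u a * exp (-G a) + ∫ τ in a..t, γ τ * exp (-G τ) ≤ u t * exp (-G t) := by
  intro t ht
  have := mul_exp_neg_le_add_integral_of_deriv_le (u := fun t => -u t) (u' := fun t => -u' t)
    (γ := fun t => -γ t) hu.neg (fun t ht => (hu' t ht).neg) hG hG' hγ.neg
    (fun t ht => by linarith [hle t ht]) t ht
  simp only [neg_mul, intervalIntegral.integral_neg] at this
  linarith

end Gronwall

theorem AntitoneOn.neg_deriv_le_mul_of_le_mul_add_integral {z z' β : ℝ → ℝ} {a b : ℝ}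
    (hz : AntitoneOn z (Icc a b)) (hderiv : ∀ t ∈ Icc a b, HasDerivAt z (z' t) t)
    (hβ : ∀ t ∈ Icc a b, 0 ≤ β t)
    (hle : ∀ t ∈ Icc a b, -z' t ≤ β t * z t + β t * ∫ τ in a..t, -z' τ) :
    ∀ t ∈ Icc a b, -z' t ≤ β t * z a := by
  intro t ht
  have hat : Icc a t ⊆ Icc a b := Icc_subset_Icc_right ht.2
  have hint := (hz.mono hat).integral_neg_deriv_le ht.1 fun τ hτ => hderiv τ (hat hτ)
  linarith [hle t ht, mul_le_mul_of_nonneg_left hint (hβ t ht)]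

theorem integral_mul_exp_neg_le_integral {z G : ℝ → ℝ} {a b : ℝ} (hab : a ≤ b)
    (hzc : ContinuousOn z (Icc a b)) (hGc : ContinuousOn G (Icc a b))
    (hz : ∀ t ∈ Icc a b, 0 ≤ z t) (hG : ∀ t ∈ Icc a b, 0 ≤ G t) :
    ∫ τ in a..b, z τ * exp (-G τ) ≤ ∫ τ in a..b, z τ :=
  integral_mono_on hab ((hzc.mul hGc.neg.rexp).intervalIntegrable_of_Icc hab)
    (hzc.intervalIntegrable_of_Icc hab) fun τ hτ =>
      mul_le_of_le_one_right (hz τ hτ) (exp_le_one_iff.2 (neg_nonpos.2 (hG τ hτ)))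

section DoubleGronwall

variable {z z' β G : ℝ → ℝ} {a b : ℝ}

theorem sub_mul_exp_neg_le_integral_of_neg_deriv_le (hzc : ContinuousOn z (Icc a b))
    (hz' : ∀ t ∈ Ioo a b, HasDerivAt z (z' t) t) (hβc : ContinuousOn β (Icc a b))
    (hGc : ContinuousOn G (Icc a b)) (hG' : ∀ t ∈ Ioo a b, HasDerivAt G (β t) t)
    (hbound : ∀ t ∈ Ioo a b, -z' t ≤ β t * z a) :
    ∀ t ∈ Icc a b, (z a - z t) * exp (-G t) ≤ ∫ τ in a..t, β τ * z τ * exp (-G τ) := by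
  intro t ht
  have := mul_exp_neg_le_add_integral_of_deriv_le (u := fun t => z a - z t)
    (γ := fun t => β t * z t) (continuousOn_const.sub hzc) (fun t ht => (hz' t ht).const_sub _)
    hGc hG' (hβc.mul hzc) (fun t ht => by linarith [hbound t ht]) t ht
  simpa only [sub_self, zero_mul, zero_add] using this

theorem mul_le_integral_mul_exp_neg_mul_exp_of_neg_deriv_le (hzc : ContinuousOn z (Icc a b))
    (hz' : ∀ t ∈ Ioo a b, HasDerivAt z (z' t) t) (hz : ∀ t ∈ Icc a b, 0 ≤ z t)
    (hβc : ContinuousOn β (Icc a b)) (hβ : MonotoneOn β (Icc a b))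
    (hGc : ContinuousOn G (Icc a b)) (hG' : ∀ t ∈ Ioo a b, HasDerivAt G (β t) t) (hGa : G a = 0)
    (hbound : ∀ t ∈ Ioo a b, -z' t ≤ β t * z a) :
    ∀ t ∈ Icc a b, z a * (t - a) ≤ (∫ τ in a..t, z τ * exp (-G τ)) * exp (G t) := by
  set Z : ℝ → ℝ := fun t => ∫ τ in a..t, z τ * exp (-G τ)
  have hEc : ContinuousOn (fun t => exp (-G t)) (Icc a b) := hGc.neg.rexp
  have hfirst := sub_mul_exp_neg_le_integral_of_neg_deriv_le hzc hz' hβc hGc hG' hbound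
  have hZ_ineq (t) (ht : t ∈ Ioo a b) : -β t * Z t + z a * exp (-G t) ≤ z t * exp (-G t) := by
    have hat : Icc a t ⊆ Icc a b := Icc_subset_Icc_right ht.2.le
    have hmean := (hβ.mono hat).integral_mul_le ht.1.le
      (fun τ hτ => mul_nonneg (hz τ (hat hτ)) (exp_pos _).le)
      (((hβc.mul (hzc.mul hEc)).mono hat).intervalIntegrable_of_Icc ht.1.le)
      (((hzc.mul hEc).mono hat).intervalIntegrable_of_Icc ht.1.le)
    simp only [← mul_assoc] at hmean
    linarith [hfirst t (Ioo_subset_Icc_self ht)]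
  have hsecond := add_integral_le_mul_exp_neg_of_mul_add_le_deriv (u := Z) (G := fun t => -G t)
    (γ := fun t => z a * exp (-G t)) (hzc.mul hEc).continuousOn_primitive_Icc
    (fun t ht => (hzc.mul hEc).hasDerivAt_primitive ht) hGc.neg (fun t ht => (hG' t ht).neg)
    (continuousOn_const.mul hEc) hZ_ineq
  have hcancel (τ : ℝ) : z a * exp (-G τ) * exp (G τ) = z a := by
    rw [mul_assoc, ← exp_add, neg_add_cancel, exp_zero, mul_one]
  intro t ht
  simpa only [hcancel, neg_neg, hGa, Z, integral_same, zero_mul, zero_add,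
    intervalIntegral.integral_const, smul_eq_mul, mul_comm (t - a)] using hsecond t ht

end DoubleGronwall

theorem double_gronwall_estimate_general
    (T k : ℝ) (hk : 0 < k)
    (F z z' : ℝ → ℝ)
    (hFc : ContinuousOn F (Icc 0 T)) (hF0 : ∀ t, 0 ≤ F t)
    (hFmono : MonotoneOn F (Icc 0 T))
    (hzd : ∀ t ∈ Icc (0:ℝ) T, HasDerivAt z (z' t) t)
    (hzpos : ∀ t, 0 < z t) (hzanti : AntitoneOn z (Icc 0 T))
    (hineq : ∀ t ∈ Icc (0:ℝ) T,
      -z' t ≤ k * F t * z t + k * F t * ∫ τ in (0:ℝ)..t, -z' τ) :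
    ∀ t ∈ Icc (0:ℝ) T,
      z 0 * t ≤ (∫ τ in (0:ℝ)..t, z τ) * Real.exp (k * ∫ τ in (0:ℝ)..t, F τ) := by
  set G : ℝ → ℝ := fun t => k * ∫ τ in (0:ℝ)..t, F τ
  have hGc : ContinuousOn G (Icc 0 T) := continuousOn_const.mul hFc.continuousOn_primitive_Icc
  have hG' (t) (ht : t ∈ Ioo 0 T) : HasDerivAt G (k * F t) t :=
    (hFc.hasDerivAt_primitive ht).const_mul k
  have hG0 : G 0 = 0 := by simp [G]
  have hzc : ContinuousOn z (Icc 0 T) := fun t ht => (hzd t ht).continuousAt.continuousWithinAt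
  have hkFmono : MonotoneOn (fun t => k * F t) (Icc 0 T) := fun x hx y hy hxy =>
    mul_le_mul_of_nonneg_left (hFmono hx hy hxy) hk.le
  have hbound := hzanti.neg_deriv_le_mul_of_le_mul_add_integral hzd
    (fun t _ => mul_nonneg hk.le (hF0 t)) hineq
  have hmain := mul_le_integral_mul_exp_neg_mul_exp_of_neg_deriv_le hzc
    (fun t ht => hzd t (Ioo_subset_Icc_self ht)) (fun t _ => (hzpos t).le)
    (continuousOn_const.mul hFc) hkFmono hGc hG' hG0 fun t ht => hbound t (Ioo_subset_Icc_self ht)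
  intro t ht
  have h0t : Icc 0 t ⊆ Icc 0 T := Icc_subset_Icc_right ht.2
  have hweight := integral_mul_exp_neg_le_integral ht.1 (hzc.mono h0t) (hGc.mono h0t)
    (fun τ _ => (hzpos τ).le) fun τ hτ => mul_nonneg hk.le (integral_nonneg hτ.1 fun x _ => hF0 x)
  calc z 0 * t = z 0 * (t - 0) := by rw [sub_zero]
    _ ≤ (∫ τ in (0:ℝ)..t, z τ * exp (-G τ)) * exp (G t) := hmain t ht
    _ ≤ (∫ τ in (0:ℝ)..t, z τ) * exp (G t) := by gcongr

/-- Double Gronwall estimate: if `z > 0` is `C¹`, nonincreasing and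
`-z'(t) ≤ k F(t) z(t) + k F(t) ∫₀ᵗ (-z'(τ)) dτ` with `F ≥ 0` continuous,
nondecreasing, `F(0) = 0`, then
`z(0)·t ≤ (∫₀ᵗ z) · exp(k ∫₀ᵗ F)` on `[0,T]`. -/
theorem double_gronwall_estimate
    (T k : ℝ) (hT : 0 < T) (hk : 0 < k)
    (F z z' : ℝ → ℝ)
    (hFc : ContinuousOn F (Icc 0 T)) (hF0 : ∀ t, 0 ≤ F t)
    (hFmono : MonotoneOn F (Icc 0 T)) (hF00 : F 0 = 0)
    (hzd : ∀ t ∈ Icc (0:ℝ) T, HasDerivAt z (z' t) t)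
    (hzpos : ∀ t, 0 < z t) (hzanti : AntitoneOn z (Icc 0 T))
    (hineq : ∀ t ∈ Icc (0:ℝ) T,
      -z' t ≤ k * F t * z t + k * F t * ∫ τ in (0:ℝ)..t, -z' τ) :
    ∀ t ∈ Icc (0:ℝ) T,
      z 0 * t ≤ (∫ τ in (0:ℝ)..t, z τ) * Real.exp (k * ∫ τ in (0:ℝ)..t, F τ) :=
  double_gronwall_estimate_general T k hk F z z' hFc hF0 hFmono hzd hzpos hzanti hineq
end

section
/- Let 0 < μ < 1 and T > 0. The set L⁺_{1-μ}(0,T) of functions of the form f(t) = ∫₀ᵗ g²(τ)/(t-τ)^{1-μ} dτ, where g ranges over nonnegative functions in L²(0,T), is dense in the cone of nonnegative functions of L²(0,T): equivalently, if f₀ ∈ L²(0,T) satisfies ∫₀^T f₀(t) (∫₀ᵗ h(τ)(t-τ)^{μ-1} dτ) dt = 0 for every nonnegative h ∈ L¹(0,T), then f₀ = 0 almost everywhere. -/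
/-!
Test the orthogonality against `h = (τ - s)₊^{-μ}` for `s ≥ 0`. Its Abel integral is the indicator
of `(s, ∞)` times the beta integral `B(1 - μ, μ) > 0`, since after the substitution
`τ = s + (t - s) u` the exponents `-μ` and `μ - 1` add up to `-1`, making the result independent
of `t`. Hence every tail integral `∫_s^T f₀` vanishes, and by Lebesgue's differentiation theorem
`f₀ = 0` a.e. on `(0, T]`.
-/

open MeasureTheory Real Set

theorem intervalIntegrable_rpow_mul_one_sub_rpow {a b : ℝ} (ha : -1 < a) (hb : -1 < b) :
    IntervalIntegrable (fun x => x ^ a * (1 - x) ^ b) volume 0 1 := by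
  refine (Complex.betaIntegral_convergent (u := a + 1) (v := b + 1) (by simp; linarith)
    (by simp; linarith)).norm.congr_uIoo fun x hx => ?_
  rw [uIoo_of_le zero_le_one] at hx
  have h1x : 0 < 1 - x := sub_pos.2 hx.2
  simp only [norm_mul]
  rw [← Complex.ofReal_one, ← Complex.ofReal_sub, Complex.norm_cpow_eq_rpow_re_of_pos hx.1,
    Complex.norm_cpow_eq_rpow_re_of_pos h1x]
  simp

theorem integral_rpow_mul_one_sub_rpow_pos {a b : ℝ} (ha : -1 < a) (hb : -1 < b) :
    0 < ∫ x in (0 : ℝ)..1, x ^ a * (1 - x) ^ b :=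
  intervalIntegral.intervalIntegral_pos_of_pos_on (intervalIntegrable_rpow_mul_one_sub_rpow ha hb)
    (fun _ hx => mul_pos (rpow_pos_of_pos hx.1 a) (rpow_pos_of_pos (sub_pos.2 hx.2) b)) one_pos

theorem integral_sub_rpow_mul_sub_rpow {a b s t : ℝ} (hst : s < t) :
    ∫ τ in s..t, (τ - s) ^ a * (t - τ) ^ b =
      (t - s) ^ (a + b + 1) * ∫ u in (0 : ℝ)..1, u ^ a * (1 - u) ^ b := by
  have hd : 0 < t - s := sub_pos.2 hst
  have hsub := intervalIntegral.integral_comp_mul_add (a := 0) (b := 1)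
    (fun τ => (τ - s) ^ a * (t - τ) ^ b) hd.ne' s
  simp only [mul_zero, zero_add, mul_one, sub_add_cancel] at hsub
  have hscale : ∀ u ∈ uIcc (0 : ℝ) 1, ((t - s) * u + s - s) ^ a * (t - ((t - s) * u + s)) ^ b =
      (t - s) ^ (a + b) * (u ^ a * (1 - u) ^ b) := by
    intro u hu
    rw [uIcc_of_le zero_le_one] at hu
    rw [add_sub_cancel_right, show t - ((t - s) * u + s) = (t - s) * (1 - u) by ring,
      mul_rpow hd.le hu.1, mul_rpow hd.le (sub_nonneg.2 hu.2), rpow_add hd]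
    ring
  rw [intervalIntegral.integral_congr hscale, intervalIntegral.integral_const_mul, smul_eq_mul,
    eq_inv_mul_iff_mul_eq₀ hd.ne'] at hsub
  rw [← hsub, rpow_add_one hd.ne']
  ring

theorem ae_eq_zero_of_forall_setIntegral_Ioc_eq_zero {E : Type*} [NormedAddCommGroup E]
    [NormedSpace ℝ E] [CompleteSpace E] {f : ℝ → E} {a b : ℝ} (hf : IntegrableOn f (Ioc a b))
    (h : ∀ x ∈ Icc a b, ∫ t in Ioc x b, f t = 0) : f =ᵐ[volume.restrict (Ioc a b)] 0 := by
  rcases lt_or_ge b a with hba | hab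
  · simp [Ioc_eq_empty_of_le hba.le, Filter.EventuallyEq]
  have hF : ∀ x ∈ Icc a b, ∫ t in b..x, f t = 0 := fun x hx => by
    rw [intervalIntegral.integral_of_ge hx.2, h x hx, neg_zero]
  have hb : ∀ᵐ x, x ≠ b := by simp [ae_iff, measure_singleton]
  have hfi : IntervalIntegrable f volume a b :=
    (intervalIntegrable_iff_integrableOn_Ioc_of_le hab).2 hf
  filter_upwards [ae_restrict_mem measurableSet_Ioc, ae_restrict_of_ae hb,
    ae_restrict_of_ae hfi.ae_hasDerivAt_integral] with x hx hxb hderiv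
  have hxIoo : x ∈ Ioo a b := ⟨hx.1, lt_of_le_of_ne hx.2 hxb⟩
  have hlocal : (fun y => ∫ t in b..y, f t) =ᶠ[nhds x] fun _ => 0 :=
    Filter.eventually_of_mem (Ioo_mem_nhds hxIoo.1 hxIoo.2) fun y hy =>
      hF y (Ioo_subset_Icc_self hy)
  exact (hderiv (Icc_subset_uIcc (Ioc_subset_Icc_self hx)) b right_mem_uIcc).unique
    ((hasDerivAt_const x 0).congr_of_eventuallyEq hlocal)

noncomputable def abelIntegral (μ : ℝ) (h : ℝ → ℝ) (t : ℝ) : ℝ :=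
  ∫ τ in Ioc 0 t, h τ * (t - τ) ^ (μ - 1)

theorem abelIntegral_indicator_sub_rpow {μ s : ℝ} (hs : 0 ≤ s) (t : ℝ) :
    abelIntegral μ ((Ioi s).indicator fun τ => (τ - s) ^ (-μ)) t =
      (Ioi s).indicator (fun _ => ∫ u in (0 : ℝ)..1, u ^ (-μ) * (1 - u) ^ (μ - 1)) t := by
  simp only [abelIntegral, ← indicator_mul_left _ _ fun τ => (t - τ) ^ (μ - 1)]
  rw [setIntegral_indicator measurableSet_Ioi, Ioc_inter_Ioi, max_eq_right hs]
  rcases le_or_gt t s with hts | hst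
  · rw [Ioc_eq_empty_of_le hts, Measure.restrict_empty, integral_zero_measure,
      indicator_of_notMem (notMem_Ioi.2 hts)]
  · rw [← intervalIntegral.integral_of_le hst.le, integral_sub_rpow_mul_sub_rpow hst,
      show -μ + (μ - 1) + 1 = 0 by ring, rpow_zero, one_mul, indicator_of_mem (mem_Ioi.2 hst)]

theorem integrableOn_indicator_Ioi_sub_rpow {a r s T : ℝ} (ha : -1 < a) :
    IntegrableOn ((Ioi s).indicator fun τ => (τ - s) ^ a) (Ioc r T) := by
  rw [IntegrableOn, integrable_indicator_iff measurableSet_Ioi, IntegrableOn,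
    Measure.restrict_restrict measurableSet_Ioi, inter_comm, Ioc_inter_Ioi]
  have hint := (intervalIntegral.intervalIntegrable_rpow' (a := 0) (b := T - s) ha).comp_sub_right s
  simp only [zero_add, sub_add_cancel] at hint
  exact hint.def'.mono_set ((Ioc_subset_Ioc_left (le_max_right r s)).trans Ioc_subset_uIoc)

theorem setIntegral_Ioc_eq_zero_of_orthogonal_abelIntegral {μ T : ℝ}
    (hμ0 : 0 < μ) (hμ1 : μ < 1) {f : ℝ → ℝ}
    (horth : ∀ h : ℝ → ℝ, (∀ τ, 0 ≤ h τ) → IntegrableOn h (Ioc 0 T) →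
      ∫ t in Ioc 0 T, f t * abelIntegral μ h t = 0)
    {s : ℝ} (hs : 0 ≤ s) : ∫ t in Ioc s T, f t = 0 := by
  have hc := integral_rpow_mul_one_sub_rpow_pos (a := -μ) (b := μ - 1) (by linarith) (by linarith)
  have hnonneg : ∀ τ, 0 ≤ (Ioi s).indicator (fun τ => (τ - s) ^ (-μ)) τ :=
    indicator_nonneg fun τ hτ => rpow_nonneg (sub_nonneg.2 (le_of_lt hτ)) _
  have horth_s := horth _ hnonneg (integrableOn_indicator_Ioi_sub_rpow (by linarith))
  simp only [abelIntegral_indicator_sub_rpow hs, ← indicator_mul_right _ f] at horth_s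
  rw [setIntegral_indicator measurableSet_Ioi, Ioc_inter_Ioi, max_eq_right hs,
    integral_mul_const] at horth_s
  exact (mul_eq_zero.1 horth_s).resolve_right hc.ne'

theorem abel_range_dense_general
    (T μ : ℝ) (hμ0 : 0 < μ) (hμ1 : μ < 1)
    (f₀ : ℝ → ℝ) (hf : MemLp f₀ 2 (volume.restrict (Ioc 0 T)))
    (horth : ∀ h : ℝ → ℝ, (∀ τ, 0 ≤ h τ) → IntegrableOn h (Ioc 0 T) →
      ∫ t in Ioc 0 T, f₀ t * ∫ τ in Ioc 0 t, h τ * (t - τ) ^ (μ - 1) = 0) :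
    f₀ =ᵐ[volume.restrict (Ioc 0 T)] 0 :=
  ae_eq_zero_of_forall_setIntegral_Ioc_eq_zero (hf.integrable one_le_two) fun _ hx =>
    setIntegral_Ioc_eq_zero_of_orthogonal_abelIntegral hμ0 hμ1 horth hx.1

/-- Density of `L⁺_{1-μ}(0,T)` in the nonnegative cone of `L²(0,T)`, in the dual
formulation: if `f₀ ∈ L²(0,T)` satisfies
`∫₀^T f₀(t) (∫₀ᵗ h(τ)(t-τ)^{μ-1} dτ) dt = 0` for every nonnegative
`h ∈ L¹(0,T)`, then `f₀ = 0` almost everywhere. -/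
theorem abel_range_dense
    (T μ : ℝ) (hT : 0 < T) (hμ0 : 0 < μ) (hμ1 : μ < 1)
    (f₀ : ℝ → ℝ) (hf : MemLp f₀ 2 (volume.restrict (Ioc 0 T)))
    (horth : ∀ h : ℝ → ℝ, (∀ τ, 0 ≤ h τ) → IntegrableOn h (Ioc 0 T) →
      ∫ t in Ioc 0 T, f₀ t * ∫ τ in Ioc 0 t, h τ * (t - τ) ^ (μ - 1) = 0) :
    f₀ =ᵐ[volume.restrict (Ioc 0 T)] 0 :=
  abel_range_dense_general T μ hμ0 hμ1 f₀ hf horth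
end
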